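/- arXiv:1104.5134 — 3 statements merged into one kernel-verified Lean document; each statement's English description precedes it below -/
import Mathlib

section
/- Let 0 ≤ a < 1/2 and suppose E : [0, ∞) → (0, ∞) is C^1 with E(0) = 1 and satisfies -D_1 ≤ E'(t) E(t)^{a - 3/2} ≤ -D_2 for all t ≥ 0, with 0 < D_2 ≤ D_1. Set α = 1/(2a - 1) < 0. Then (C_1 t + 1)^{2α} ≤ E(t) ≤ (C_2 t + 1)^{2α} for all t ≥ 0, where C_i = -D_i/(2α) > 0. -/
/-- Sub-critical integration step (generalized Haff's law):
`(C₁t+1)^{2α} ≤ E(t) ≤ (C₂t+1)^{2α}` with `α = 1/(2a-1) < 0` and `Cᵢ = -Dᵢ/(2α)`. -/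
theorem subcritical_two_sided_bounds
    (a D₁ D₂ : ℝ) (ha0 : 0 ≤ a) (ha : a < 1 / 2)
    (hD₂ : 0 < D₂) (hD : D₂ ≤ D₁)
    (E E' : ℝ → ℝ)
    (hEpos : ∀ t, 0 ≤ t → 0 < E t)
    (hE0 : E 0 = 1)
    (hderiv : ∀ t, 0 ≤ t → HasDerivAt E (E' t) t)
    (hineq : ∀ t, 0 ≤ t →
      -D₁ ≤ E' t * E t ^ (a - 3 / 2 : ℝ) ∧ E' t * E t ^ (a - 3 / 2 : ℝ) ≤ -D₂) :
    ∀ t, 0 ≤ t →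
      (-D₁ / (2 * (1 / (2 * a - 1))) * t + 1) ^ (2 * (1 / (2 * a - 1)) : ℝ) ≤ E t ∧
      E t ≤ (-D₂ / (2 * (1 / (2 * a - 1))) * t + 1) ^ (2 * (1 / (2 * a - 1)) : ℝ) := by
  have hD₁ : 0 < D₁ := hD₂.trans_le hD
  set b : ℝ := a - 1 / 2 with hb
  have hbneg : b < 0 := by simp [hb]; linarith
  have hbne : b ≠ 0 := ne_of_lt hbneg
  -- exponent and constant simplifications
  have hexp : (2 * (1 / (2 * a - 1)) : ℝ) = 1 / b := by
    rw [hb]; field_simp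
  set G : ℝ → ℝ := fun t => E t ^ b with hG
  have hGderiv : ∀ t, 0 ≤ t →
      HasDerivAt G (b * (E' t * E t ^ (a - 3 / 2 : ℝ))) t := by
    intro t ht
    have h := (hderiv t ht).rpow_const (p := b) (Or.inl (hEpos t ht).ne')
    have : E' t * b * E t ^ (b - 1) = b * (E' t * E t ^ (a - 3 / 2 : ℝ)) := by
      have : b - 1 = a - 3 / 2 := by rw [hb]; ring
      rw [this]; ring
    rwa [this] at h
  have hG0 : G 0 = 1 := by simp [hG, hE0]
  have hGpos : ∀ t, 0 ≤ t → 0 < G t := fun t ht =>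
    Real.rpow_pos_of_pos (hEpos t ht) b
  -- continuity / differentiability on Ici 0
  have hcont : ContinuousOn G (Set.Ici 0) := fun t ht =>
    (hGderiv t ht).continuousAt.continuousWithinAt
  have hdiff : DifferentiableOn ℝ G (interior (Set.Ici (0:ℝ))) := by
    rw [interior_Ici]
    exact fun t ht => ((hGderiv t (le_of_lt ht)).differentiableAt).differentiableWithinAt
  -- derivative bounds: -b*D₂ ≤ G' ≤ -b*D₁
  have hderiv_lb : ∀ x ∈ interior (Set.Ici (0:ℝ)), -b * D₂ ≤ deriv G x := by
    rw [interior_Ici]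
    intro x hx
    have hx' : (0:ℝ) ≤ x := le_of_lt hx
    rw [(hGderiv x hx').deriv]
    have h := (hineq x hx').2
    nlinarith
  have hderiv_ub : ∀ x ∈ interior (Set.Ici (0:ℝ)), deriv G x ≤ -b * D₁ := by
    rw [interior_Ici]
    intro x hx
    have hx' : (0:ℝ) ≤ x := le_of_lt hx
    rw [(hGderiv x hx').deriv]
    have h := (hineq x hx').1
    nlinarith
  intro t ht
  have hlb := (convex_Ici (0:ℝ)).mul_sub_le_image_sub_of_le_deriv hcont hdiff hderiv_lb
    0 Set.self_mem_Ici t ht ht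
  have hub := (convex_Ici (0:ℝ)).image_sub_le_mul_sub_of_deriv_le hcont hdiff hderiv_ub
    0 Set.self_mem_Ici t ht ht
  rw [hG0, sub_zero] at hlb hub
  -- so: -b*D₂*t + 1 ≤ G t ≤ -b*D₁*t + 1
  have hGlb : -b * D₂ * t + 1 ≤ G t := by linarith
  have hGub : G t ≤ -b * D₁ * t + 1 := by linarith
  have hnb : 0 ≤ -b := neg_nonneg.mpr hbneg.le
  have hC₂pos : 0 < -b * D₂ * t + 1 := by
    have := mul_nonneg (mul_nonneg hnb hD₂.le) ht; linarith
  have hC₁pos : 0 < -b * D₁ * t + 1 := by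
    have := mul_nonneg (mul_nonneg hnb hD₁.le) ht; linarith
  -- E t = (G t) ^ (1/b)
  have hEt : E t = G t ^ ((1:ℝ)/b) := by
    rw [hG, ← Real.rpow_mul (hEpos t ht).le, mul_one_div, div_self hbne, Real.rpow_one]
  have hzle : (1:ℝ)/b ≤ 0 := le_of_lt (div_neg_of_pos_of_neg one_pos hbneg)
  constructor
  · have hc : -D₁ / (2 * (1 / (2 * a - 1))) = -b * D₁ := by
      rw [hexp]; field_simp
    rw [hc, hexp, hEt]
    exact Real.rpow_le_rpow_of_nonpos (hGpos t ht) hGub hzle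
  · have hc : -D₂ / (2 * (1 / (2 * a - 1))) = -b * D₂ := by
      rw [hexp]; field_simp
    rw [hc, hexp, hEt]
    exact Real.rpow_le_rpow_of_nonpos hC₂pos hGlb hzle
end

section
/- Let μ_0 > 0, M > 0, 0 < γ < 1, and let y : [0, ∞) → [0, ∞) be C^1 satisfying y'(t) ≤ -(1-γ) y(t)^{4/3} + (3/2)γ ( M^2/(1+μ_0 t)^4 + y(t) M^{1/2}/(1+μ_0 t) ) for all t ≥ 0. Then there exists κ > 0 (depending on γ, M, μ_0) such that if y(0) ≤ κ, then y(t) ≤ κ/(1+μ_0 t)^3 for all t ≥ 0. -/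
/-- ODE comparison lemma for the third-moment decay: there exists `κ > 0`
(depending only on `γ, M, μ₀`) such that any nonnegative `C¹` solution of the
differential inequality with `y(0) ≤ κ` satisfies `y(t) ≤ κ/(1+μ₀t)³`. -/
theorem third_moment_ode_comparison
    (μ₀ M γ : ℝ) (hμ₀ : 0 < μ₀) (hM : 0 < M) (hγ0 : 0 < γ) (hγ1 : γ < 1) :
    ∃ κ : ℝ, 0 < κ ∧
      ∀ y y' : ℝ → ℝ,
        (∀ t, 0 ≤ t → 0 ≤ y t) →
        (∀ t, 0 ≤ t → HasDerivAt y (y' t) t) →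
        (∀ t, 0 ≤ t →
          y' t ≤ -(1 - γ) * y t ^ ((4 : ℝ) / 3) +
            (3 / 2) * γ * (M ^ 2 / (1 + μ₀ * t) ^ 4 +
              y t * M ^ ((1 : ℝ) / 2) / (1 + μ₀ * t))) →
        y 0 ≤ κ →
        ∀ t, 0 ≤ t → y t ≤ κ / (1 + μ₀ * t) ^ 3 := by
  set S : ℝ := M ^ ((1 : ℝ) / 2) with hS
  have hSpos : 0 < S := Real.rpow_pos_of_pos hM _
  set C : ℝ := (3 / 2) * γ * M ^ 2 + (3 / 2) * γ * S + 3 * μ₀ with hC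
  have hCpos : 0 < C := by positivity
  have h1γ : 0 < 1 - γ := by linarith
  set κ : ℝ := max 1 ((C / (1 - γ) + 1) ^ 3) with hκdef
  have hκ1 : (1 : ℝ) ≤ κ := le_max_left _ _
  have hκpos : 0 < κ := lt_of_lt_of_le one_pos hκ1
  -- key inequality : C κ < (1-γ) κ^{4/3}
  have hkey : C * κ < (1 - γ) * κ ^ ((4 : ℝ) / 3) := by
    have hbase : 0 < C / (1 - γ) + 1 := by positivity
    have hroot : C / (1 - γ) + 1 ≤ κ ^ ((1 : ℝ) / 3) := by
      have h3 : ((C / (1 - γ) + 1) ^ 3 : ℝ) ≤ κ := le_max_right _ _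
      have h4 := Real.rpow_le_rpow (by positivity) h3 (by norm_num : (0:ℝ) ≤ 1/3)
      calc C / (1 - γ) + 1 = ((C / (1 - γ) + 1) ^ 3) ^ ((1:ℝ)/3) := by
            rw [← Real.rpow_natCast (C / (1 - γ) + 1) 3, ← Real.rpow_mul hbase.le]
            norm_num
        _ ≤ κ ^ ((1:ℝ)/3) := h4
    have hsplit : κ ^ ((4 : ℝ) / 3) = κ * κ ^ ((1 : ℝ) / 3) := by
      rw [← Real.rpow_one_add' (by positivity) (by norm_num : (1:ℝ) + 1/3 ≠ 0)]
      norm_num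
    rw [hsplit]
    have hC' : C < (1 - γ) * (C / (1 - γ) + 1) := by
      rw [mul_add, mul_div_cancel₀ _ h1γ.ne']; linarith
    calc C * κ < ((1 - γ) * (C / (1 - γ) + 1)) * κ :=
          mul_lt_mul_of_pos_right hC' hκpos
      _ ≤ ((1 - γ) * κ ^ ((1:ℝ)/3)) * κ :=
          mul_le_mul_of_nonneg_right
            (mul_le_mul_of_nonneg_left hroot h1γ.le) hκpos.le
      _ = (1 - γ) * (κ * κ ^ ((1:ℝ)/3)) := by ring
  refine ⟨κ, hκpos, ?_⟩
  intro y y' hynn hyd hineq hy0 t ht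
  set B : ℝ → ℝ := fun x => κ / (1 + μ₀ * x) ^ 3 with hBdef
  set B' : ℝ → ℝ := fun x => -(3 * κ * μ₀) / (1 + μ₀ * x) ^ 4 with hB'def
  have hs : ∀ x : ℝ, 0 ≤ x → (1 : ℝ) ≤ 1 + μ₀ * x := by
    intro x hx; nlinarith
  have hBd : ∀ x, 0 ≤ x → HasDerivAt B (B' x) x := by
    intro x hx
    have hsx : (0:ℝ) < 1 + μ₀ * x := lt_of_lt_of_le one_pos (hs x hx)
    have h1 : HasDerivAt (fun u : ℝ => 1 + μ₀ * u) μ₀ x := by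
      simpa using ((hasDerivAt_id x).const_mul μ₀).const_add 1
    have h2 : HasDerivAt (fun u : ℝ => (1 + μ₀ * u) ^ 3)
        (((3 : ℕ) : ℝ) * (1 + μ₀ * x) ^ 2 * μ₀) x := by
      simpa using h1.fun_pow 3
    have h3 := (hasDerivAt_const x κ).fun_div h2 (by positivity)
    convert h3 using 1
    · rfl
    · rfl
    simp only [hB'def]
    field_simp
    ring
  have hcont : ContinuousOn y (Set.Icc 0 t) := fun x hx =>
    (hyd x hx.1).continuousAt.continuousWithinAt
  have hBcont : ContinuousOn B (Set.Icc 0 t) := fun x hx =>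
    (hBd x hx.1).continuousAt.continuousWithinAt
  have hbound : ∀ x ∈ Set.Ico (0:ℝ) t, y x = B x → y' x < B' x := by
    intro x hx hcross
    have hx0 := hx.1
    have hsx1 : (1:ℝ) ≤ 1 + μ₀ * x := hs x hx0
    have hsx : (0:ℝ) < 1 + μ₀ * x := lt_of_lt_of_le one_pos hsx1
    set s : ℝ := 1 + μ₀ * x with hsdef
    have hyx : y x = κ / s ^ 3 := hcross
    have hpow : y x ^ ((4:ℝ)/3) = κ ^ ((4:ℝ)/3) / s ^ 4 := by
      rw [hyx, Real.div_rpow hκpos.le (by positivity)]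
      congr 1
      rw [← Real.rpow_natCast s 3, ← Real.rpow_mul hsx.le, ← Real.rpow_natCast s 4]
      norm_num
    have h := hineq x hx0
    rw [hpow, hyx] at h
    have hLHS : -(1 - γ) * (κ ^ ((4:ℝ)/3) / s ^ 4) +
        (3/2) * γ * (M ^ 2 / s ^ 4 + (κ / s ^ 3) * S / s)
        = (-(1 - γ) * κ ^ ((4:ℝ)/3) + (3/2) * γ * M ^ 2 + (3/2) * γ * S * κ)
            / s ^ 4 := by
      field_simp
      ring
    have hnum : -(1 - γ) * κ ^ ((4:ℝ)/3) + (3/2) * γ * M ^ 2 + (3/2) * γ * S * κ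
        < -(3 * κ * μ₀) := by
      have hM2 : (3/2) * γ * M ^ 2 ≤ (3/2) * γ * M ^ 2 * κ := by
        have h0 : (0:ℝ) ≤ (3/2) * γ * M ^ 2 * (κ - 1) :=
          mul_nonneg (by positivity) (by linarith)
        linarith
      have hexp : C * κ = (3/2) * γ * M ^ 2 * κ + (3/2) * γ * S * κ + 3 * μ₀ * κ := by
        rw [hC]; ring
      linarith [hkey]
    calc y' x ≤ _ := h
      _ = _ / s ^ 4 := hLHS
      _ < -(3 * κ * μ₀) / s ^ 4 :=
          (div_lt_div_iff_of_pos_right (by positivity : (0:ℝ) < s ^ 4)).mpr hnum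
      _ = B' x := rfl
  have hmain := image_le_of_deriv_right_lt_deriv_boundary' hcont
    (fun x hx => (hyd x hx.1).hasDerivWithinAt)
    (show y 0 ≤ B 0 by simpa [hBdef] using hy0)
    hBcont
    (fun x hx => (hBd x hx.1).hasDerivWithinAt)
    hbound
    (Set.right_mem_Icc.mpr ht)
  simpa [hBdef] using hmain
end

section
/- Suppose E_g : [0, ∞) → R is C^1 with 0 < c_0 ≤ E_g(s) ≤ c_1 for all s, and E_g'(s) → 0 as s → ∞. Let E : [0, T_c) → (0, ∞) be C^1 with E(0) = 1, E(t) → 0 as t → T_c, and suppose T : [0, T_c) → [0, ∞) satisfies T(t) → ∞ as t → T_c and the identity E_g'(T(t))/(2 E_g(T(t))) - (1/2) E_g(T(t))^{1/2} E'(t) E(t)^{a - 3/2} = 1 for all t ∈ [0, T_c). Then there exist t_0 ∈ [0, T_c) and constants 0 < D_2 ≤ D_1 such that -D_1 ≤ E'(t) E(t)^{a - 3/2} ≤ -D_2 for all t ∈ (t_0, T_c). -/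
/-!
Along `t → T_c` we have `T(t) → ∞`, hence `E_g'(T(t)) → 0`, and the identity says that
`√(E_g(T(t))) · E'(t) E(t)^{a-3/2} = E_g'(T(t)) / E_g(T(t)) - 2` is eventually within `1/2` of `-2`.
Dividing by `√(E_g(T(t))) ∈ [√c₀, √c₁]` gives `D₁ = 5 / (2√c₀)` and `D₂ = 3 / (2√c₁)`.
-/

open Set Filter Topology Metric

lemma mem_Icc_neg_div_of_mul_mem_Icc {m M x p A B : ℝ} (hm : 0 < m) (hmx : m ≤ x)
    (hxM : x ≤ M) (hB : 0 ≤ B) (h : x * p ∈ Icc (-A) (-B)) :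
    p ∈ Icc (-(A / m)) (-(B / M)) := by
  have hx : 0 < x := hm.trans_le hmx
  have hp : p ≤ 0 := nonpos_of_mul_nonpos_right (h.2.trans (neg_nonpos.mpr hB)) hx
  constructor
  · rw [neg_le, le_div_iff₀ hm]
    calc -p * m ≤ -p * x := by gcongr; linarith
      _ ≤ A := by linarith [h.1]
  · rw [le_neg, div_le_iff₀ (hx.trans_le hxM)]
    calc B ≤ -p * x := by linarith [h.2]
      _ ≤ -p * M := by gcongr; linarith

lemma sqrt_mul_mem_Icc_of_identity {g e p : ℝ} (hg : 0 < g) (he : |e| ≤ g / 2)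
    (h : e / (2 * g) - 1 / 2 * √g * p = 1) :
    √g * p ∈ Icc (-(5 / 2)) (-(3 / 2)) := by
  have hsolve : √g * p = e / g - 2 := by
    field_simp at h ⊢
    linarith
  have hratio : |e / g| ≤ 1 / 2 := by
    rw [abs_div, abs_of_pos hg, div_le_iff₀ hg]
    linarith
  rw [hsolve]
  constructor <;> linarith [abs_le.mp hratio]

theorem two_sided_bounds_from_identity_general
    (a Tc c₀ c₁ : ℝ) (hTc : 0 < Tc) (hc₀ : 0 < c₀) (hc : c₀ ≤ c₁)
    (Eg Eg' E E' T : ℝ → ℝ)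
    (hEgbound : ∀ s, 0 ≤ s → c₀ ≤ Eg s ∧ Eg s ≤ c₁)
    (hEg'lim : Tendsto Eg' atTop (nhds 0))
    (hTlim : Tendsto T (nhdsWithin Tc (Iio Tc)) atTop)
    (hident : ∀ t ∈ Ico (0 : ℝ) Tc,
      Eg' (T t) / (2 * Eg (T t)) -
        (1 / 2) * Real.sqrt (Eg (T t)) * E' t * E t ^ (a - 3 / 2 : ℝ) = 1) :
    ∃ t₀ ∈ Ico (0 : ℝ) Tc, ∃ D₁ D₂ : ℝ, 0 < D₂ ∧ D₂ ≤ D₁ ∧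
      ∀ t ∈ Ioo t₀ Tc,
        -D₁ ≤ E' t * E t ^ (a - 3 / 2 : ℝ) ∧ E' t * E t ^ (a - 3 / 2 : ℝ) ≤ -D₂ := by
  have hlarge : ∀ᶠ s in atTop, 0 ≤ s ∧ |Eg' s| ≤ c₀ / 2 :=
    ((eventually_ge_atTop 0).and
      (hEg'lim.eventually (closedBall_mem_nhds 0 (half_pos hc₀)))).mono
        fun s hs => ⟨hs.1, by simpa using hs.2⟩
  have hnear : ∀ᶠ t in 𝓝[<] Tc, 0 ≤ T t ∧ |Eg' (T t)| ≤ c₀ / 2 := hTlim.eventually hlarge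
  obtain ⟨l, hl, hsub⟩ := mem_nhdsLT_iff_exists_Ioo_subset.mp hnear
  refine ⟨max l 0, ⟨le_max_right _ _, max_lt hl hTc⟩, 5 / 2 / √c₀, 3 / 2 / √c₁,
    div_pos (by norm_num) (Real.sqrt_pos.mpr (hc₀.trans_le hc)), by gcongr; norm_num,
    fun t ht => ?_⟩
  obtain ⟨hT, he⟩ := hsub ⟨(le_max_left _ _).trans_lt ht.1, ht.2⟩
  obtain ⟨hg₀, hg₁⟩ := hEgbound (T t) hT
  have hid := hident t ⟨(le_max_right _ _).trans ht.1.le, ht.2⟩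
  rw [mul_assoc _ (E' t)] at hid
  exact mem_Icc_neg_div_of_mul_mem_Icc (Real.sqrt_pos.mpr hc₀) (Real.sqrt_le_sqrt hg₀)
    (Real.sqrt_le_sqrt hg₁) (by norm_num)
    (sqrt_mul_mem_Icc_of_identity (hc₀.trans_le hg₀) (he.trans (by linarith)) hid)

/-- Key asymptotic step for the anomalous cooling laws: from the identity
`E_g'(T(t))/(2E_g(T(t))) - (1/2)E_g(T(t))^{1/2} E'(t) E(t)^{a-3/2} = 1`,
the uniform bounds on `E_g` and the vanishing of `E_g'` at infinity, one gets
uniform two-sided bounds `-D₁ ≤ E'(t)E(t)^{a-3/2} ≤ -D₂` near the cooling time. -/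
theorem two_sided_bounds_from_identity
    (a Tc c₀ c₁ : ℝ) (hTc : 0 < Tc) (hc₀ : 0 < c₀) (hc : c₀ ≤ c₁)
    (Eg Eg' E E' T : ℝ → ℝ)
    (hEg : ∀ s, 0 ≤ s → HasDerivAt Eg (Eg' s) s)
    (hEgbound : ∀ s, 0 ≤ s → c₀ ≤ Eg s ∧ Eg s ≤ c₁)
    (hEg'lim : Tendsto Eg' atTop (nhds 0))
    (hEpos : ∀ t ∈ Ico (0 : ℝ) Tc, 0 < E t)
    (hE0 : E 0 = 1)
    (hE : ∀ t ∈ Ico (0 : ℝ) Tc, HasDerivAt E (E' t) t)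
    (hElim : Tendsto E (nhdsWithin Tc (Iio Tc)) (nhds 0))
    (hTrange : ∀ t ∈ Ico (0 : ℝ) Tc, 0 ≤ T t)
    (hTlim : Tendsto T (nhdsWithin Tc (Iio Tc)) atTop)
    (hident : ∀ t ∈ Ico (0 : ℝ) Tc,
      Eg' (T t) / (2 * Eg (T t)) -
        (1 / 2) * Real.sqrt (Eg (T t)) * E' t * E t ^ (a - 3 / 2 : ℝ) = 1) :
    ∃ t₀ ∈ Ico (0 : ℝ) Tc, ∃ D₁ D₂ : ℝ, 0 < D₂ ∧ D₂ ≤ D₁ ∧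
      ∀ t ∈ Ioo t₀ Tc,
        -D₁ ≤ E' t * E t ^ (a - 3 / 2 : ℝ) ∧ E' t * E t ^ (a - 3 / 2 : ℝ) ≤ -D₂ :=
  two_sided_bounds_from_identity_general a Tc c₀ c₁ hTc hc₀ hc Eg Eg' E E' T hEgbound hEg'lim hTlim
    hident
end
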